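/- For all n ≥ 1, p(q(n)) = q(p(n)) + 1. -/

import Mathlib

/-!
The values of `p` and of `q` are strictly increasing and partition the positive integers, so
for every `m` the number of `p`-values `≤ m` plus the number of `q`-values `≤ m` is `m`.
Counting at `m = q n - 1`, which is not a `q`-value because consecutive `q`-values differ by at
least two, gives `q n = p (p n) + 1`. Hence `q (p n) = p n + q n - 1`, while
`q (p n + 1) ≥ p n + q n + 2`, and counting at `m = p n + q n` gives `p (q n) = p n + q n`.
Combining the two identities, `p (q n) = q (p n) + 1`.
-/

open Set

section Complementary

variable {f g : ℕ → ℕ}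

theorem exists_forall_le_iff_le_of_strictMonoOn (hf : StrictMonoOn f (Ici 1)) (m : ℕ) :
    ∃ a, ∀ k, 1 ≤ k → (f k ≤ m ↔ k ≤ a) := by
  have hunbdd : ∃ a, m < f (a + 1) := by
    have hshift : StrictMono fun k => f (k + 1) := fun i j hij =>
      hf (by simp) (by simp) (by omega)
    exact ⟨m + 1, (hshift.id_le m).trans_lt (hshift m.lt_succ_self)⟩
  classical
  refine ⟨Nat.find hunbdd, fun k hk => ⟨fun hkm => ?_, fun hka => ?_⟩⟩
  · by_contra! hlt
    have hmono := hf.monotoneOn (mem_Ici.2 (Nat.le_add_left 1 _)) (mem_Ici.2 hk) hlt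
    have := Nat.find_spec hunbdd
    omega
  · have := Nat.find_min hunbdd (show k - 1 < Nat.find hunbdd by omega)
    rwa [Nat.sub_add_cancel hk, not_lt] at this

theorem add_eq_of_forall_le_iff_le (hf : InjOn f (Ici 1)) (hg : InjOn g (Ici 1))
    (hf0 : ∀ k, 1 ≤ k → 0 < f k) (hg0 : ∀ k, 1 ≤ k → 0 < g k)
    (hfg : ∀ i j, 1 ≤ i → 1 ≤ j → f i ≠ g j)
    (hcover : ∀ m, 1 ≤ m → ∃ k, 1 ≤ k ∧ (f k = m ∨ g k = m))
    {m a b : ℕ} (ha : ∀ k, 1 ≤ k → (f k ≤ m ↔ k ≤ a))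
    (hb : ∀ k, 1 ≤ k → (g k ≤ m ↔ k ≤ b)) :
    a + b = m := by
  classical
  have hunion : (Finset.Icc 1 a).image f ∪ (Finset.Icc 1 b).image g = Finset.Icc 1 m := by
    ext x
    simp only [Finset.mem_union, Finset.mem_image, Finset.mem_Icc]
    constructor
    · rintro (⟨k, ⟨hk, hka⟩, rfl⟩ | ⟨k, ⟨hk, hkb⟩, rfl⟩)
      · exact ⟨hf0 k hk, (ha k hk).2 hka⟩
      · exact ⟨hg0 k hk, (hb k hk).2 hkb⟩
    · rintro ⟨hx, hxm⟩
      obtain ⟨k, hk, rfl | rfl⟩ := hcover x hx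
      · exact Or.inl ⟨k, ⟨hk, (ha k hk).1 hxm⟩, rfl⟩
      · exact Or.inr ⟨k, ⟨hk, (hb k hk).1 hxm⟩, rfl⟩
  have hdisj : Disjoint ((Finset.Icc 1 a).image f) ((Finset.Icc 1 b).image g) := by
    simp only [Finset.disjoint_left, Finset.mem_image, Finset.mem_Icc]
    rintro _ ⟨i, ⟨hi, -⟩, rfl⟩ ⟨j, ⟨hj, -⟩, hji⟩
    exact hfg i j hi hj hji.symm
  have hIcc : ∀ n, (↑(Finset.Icc 1 n) : Set ℕ) ⊆ Ici 1 := fun n k hk =>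
    mem_Ici.2 (Finset.mem_Icc.1 hk).1
  have hcard := congrArg Finset.card hunion
  rw [Finset.card_union_of_disjoint hdisj, Finset.card_image_of_injOn (hf.mono (hIcc a)),
    Finset.card_image_of_injOn (hg.mono (hIcc b))] at hcard
  simpa using hcard

end Complementary

structure IsWythoffPair (p q : ℕ → ℕ) : Prop where
  p_one : p 1 = 1
  q_eq : ∀ n, 1 ≤ n → q n = p n + n
  isLeast_p_add_one : ∀ n, 1 ≤ n →
    IsLeast {m : ℕ | 0 < m ∧ ∀ i, 1 ≤ i → i ≤ n → m ≠ p i ∧ m ≠ q i} (p (n + 1))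

namespace IsWythoffPair

variable {p q : ℕ → ℕ}

theorem pos (h : IsWythoffPair p q) {n : ℕ} (hn : 1 ≤ n) : 0 < p n :=
  match n, hn with
  | 1, _ => by rw [h.p_one]; exact Nat.one_pos
  | k + 2, _ => (h.isLeast_p_add_one (k + 1) (by omega)).1.1

theorem p_lt_p_add_one (h : IsWythoffPair p q) {n : ℕ} (hn : 1 ≤ n) : p n < p (n + 1) := by
  have hne : p (n + 1) ≠ p n := ((h.isLeast_p_add_one n hn).1.2 n hn le_rfl).1
  suffices p n ≤ p (n + 1) by omega
  match n, hn with
  | 1, _ => rw [h.p_one]; exact h.pos (n := 2) (by omega)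
  | k + 2, _ =>
    obtain ⟨hpos, havoid⟩ := (h.isLeast_p_add_one (k + 2) (by omega)).1
    exact (h.isLeast_p_add_one (k + 1) (by omega)).2
      ⟨hpos, fun i hi hik => havoid i hi (by omega)⟩

theorem strictMonoOn (h : IsWythoffPair p q) : StrictMonoOn p (Ici 1) :=
  strictMonoOn_of_lt_add_one ordConnected_Ici fun _ _ hn _ => h.p_lt_p_add_one hn

theorem le_p (h : IsWythoffPair p q) {n : ℕ} (hn : 1 ≤ n) : n ≤ p n := by
  induction n, hn using Nat.le_induction with
  | base => exact h.p_one.ge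
  | succ n hn ih => exact ih.trans_lt (h.p_lt_p_add_one hn)

theorem q_add_two_le (h : IsWythoffPair p q) {k n : ℕ} (hk : 1 ≤ k) (hkn : k < n) :
    q k + 2 ≤ q n := by
  have := h.strictMonoOn (mem_Ici.2 hk) (mem_Ici.2 (hk.trans hkn.le)) hkn
  rw [h.q_eq k hk, h.q_eq n (by omega)]
  omega

theorem q_strictMonoOn (h : IsWythoffPair p q) : StrictMonoOn q (Ici 1) :=
  fun _ hk _ _ hkn => by have := h.q_add_two_le hk hkn; omega

theorem p_ne_q (h : IsWythoffPair p q) {i j : ℕ} (hi : 1 ≤ i) (hj : 1 ≤ j) : p i ≠ q j := by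
  rcases lt_or_ge j i with hji | hij
  · obtain ⟨k, rfl⟩ : ∃ k, i = k + 1 := ⟨i - 1, by omega⟩
    exact ((h.isLeast_p_add_one k (by omega)).1.2 j hj (by omega)).2
  · have := h.strictMonoOn.monotoneOn (mem_Ici.2 hi) (mem_Ici.2 hj) hij
    rw [h.q_eq j hj]
    omega

theorem exists_p_or_q (h : IsWythoffPair p q) {m : ℕ} (hm : 1 ≤ m) :
    ∃ k, 1 ≤ k ∧ (p k = m ∨ q k = m) := by
  by_contra! hmiss
  have hgap : p (m + 1) ≤ m :=
    (h.isLeast_p_add_one m hm).2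
      ⟨hm, fun i hi _ => ⟨(hmiss i hi).1.symm, (hmiss i hi).2.symm⟩⟩
  have := h.le_p (n := m + 1) (by omega)
  omega

theorem add_eq (h : IsWythoffPair p q) {m a b : ℕ}
    (ha : ∀ k, 1 ≤ k → (p k ≤ m ↔ k ≤ a))
    (hb : ∀ k, 1 ≤ k → (q k ≤ m ↔ k ≤ b)) : a + b = m :=
  add_eq_of_forall_le_iff_le h.strictMonoOn.injOn h.q_strictMonoOn.injOn (fun _ => h.pos)
    (fun k hk => by rw [h.q_eq k hk]; omega) (fun _ _ => h.p_ne_q) (fun _ => h.exists_p_or_q)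
    ha hb

theorem p_eq_of_forall_le_iff_le (h : IsWythoffPair p q) {m a : ℕ} (hm : 1 ≤ m)
    (hmq : ∀ k, 1 ≤ k → q k ≠ m) (ha : ∀ k, 1 ≤ k → (p k ≤ m ↔ k ≤ a)) :
    p a = m := by
  obtain ⟨j, hj, hpj | hqj⟩ := h.exists_p_or_q hm
  · have hja := (ha j hj).1 hpj.le
    have hpa := (ha a (hj.trans hja)).2 le_rfl
    have := h.strictMonoOn.monotoneOn (mem_Ici.2 hj) (mem_Ici.2 (hj.trans hja)) hja
    omega
  · exact absurd hqj (hmq j hj)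

theorem q_eq_p_p_add_one (h : IsWythoffPair p q) {n : ℕ} (hn : 1 ≤ n) : q n = p (p n) + 1 := by
  have hqn := h.q_eq n hn
  have hpn := h.pos hn
  obtain ⟨a, ha⟩ := exists_forall_le_iff_le_of_strictMonoOn h.strictMonoOn (q n - 1)
  have hb : ∀ k, 1 ≤ k → (q k ≤ q n - 1 ↔ k ≤ n - 1) := fun k hk => by
    have := h.q_strictMonoOn.lt_iff_lt (mem_Ici.2 hk) (mem_Ici.2 hn)
    omega
  obtain rfl : a = p n := by
    have := h.add_eq ha hb
    omega
  have hmq : ∀ k, 1 ≤ k → q k ≠ q n - 1 := fun k hk hqk => by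
    have hkn : k < n := (h.q_strictMonoOn.lt_iff_lt (mem_Ici.2 hk) (mem_Ici.2 hn)).1 (by omega)
    have := h.q_add_two_le hk hkn
    omega
  have := h.p_eq_of_forall_le_iff_le (by omega) hmq ha
  omega

theorem p_q_eq (h : IsWythoffPair p q) {n : ℕ} (hn : 1 ≤ n) : p (q n) = p n + q n := by
  have hpn := h.pos hn
  have hkey := h.q_eq_p_p_add_one hn
  have hq_pn := h.q_eq (p n) hpn
  have hp_pn1 : q n + 1 ≤ p (p n + 1) := by
    have := h.p_lt_p_add_one hpn
    have := h.p_ne_q (i := p n + 1) (by omega) hn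
    omega
  have hsplit : ∀ k, 1 ≤ k →
      (k ≤ p n ∧ q k + 1 ≤ p n + q n) ∨ (p n < k ∧ p n + q n + 2 ≤ q k) := by
    intro k hk
    rcases le_or_gt k (p n) with hk' | hk'
    · have := h.q_strictMonoOn.monotoneOn (mem_Ici.2 hk) (mem_Ici.2 hpn) hk'
      omega
    · have := h.q_strictMonoOn.monotoneOn (mem_Ici.2 (Nat.le_add_left 1 (p n)))
        (mem_Ici.2 hk) hk'
      have := h.q_eq (p n + 1) (by omega)
      omega
  have hb : ∀ k, 1 ≤ k → (q k ≤ p n + q n ↔ k ≤ p n) := fun k hk => by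
    have := hsplit k hk
    omega
  have hmq : ∀ k, 1 ≤ k → q k ≠ p n + q n := fun k hk => by
    have := hsplit k hk
    omega
  obtain ⟨a, ha⟩ := exists_forall_le_iff_le_of_strictMonoOn h.strictMonoOn (p n + q n)
  obtain rfl : a = q n := by
    have := h.add_eq ha hb
    omega
  exact h.p_eq_of_forall_le_iff_le (by omega) hmq ha

end IsWythoffPair

/-- Wythoff sequences: `p 1 = 1`, `q n = p n + n` for `n ≥ 1`, and `p (n+1)` is the
smallest positive integer not contained in `U_n = {p 1, …, p n, q 1, …, q n}`. -/
theorem stmt_12 (p q : ℕ → ℕ)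
    (hp1 : p 1 = 1)
    (hq : ∀ n, 1 ≤ n → q n = p n + n)
    (hmin : ∀ n, 1 ≤ n →
      IsLeast {m : ℕ | 0 < m ∧ ∀ i, 1 ≤ i → i ≤ n → m ≠ p i ∧ m ≠ q i} (p (n + 1))) :
    ∀ n, 1 ≤ n → p (q n) = q (p n) + 1 := by
  intro n hn
  have h : IsWythoffPair p q := ⟨hp1, hq, hmin⟩
  rw [h.p_q_eq hn, h.q_eq (p n) (h.pos hn), h.q_eq_p_p_add_one hn]
  omega
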